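/- Let n be a positive integer and let f be a C² complex-valued function on 𝒰_n = ℝ₊ × ℋ_n that is holomorphic, i.e. ∂f/∂w̄ := (1/2)(∂f/∂s + i ∂f/∂t) = 0 and Z̄_j f := ∂f/∂z̄_j − i z_j ∂f/∂s = 0 for j = 1,…,n. Then for every p > 0 and every (t,g) ∈ 𝒰_n with f(t,g) ≠ 0, one has ℒ|f|^p(t,g) ≥ 0, where ℒ = (1/(4n)) ∑_{j=1}^{2n} X_j² − ∂/∂t is the heat operator. -/

import Mathlib

/-!
Writing `Y_j = X_{n+j}`: since `X_j + i Y_j = 2 Z̄_j` and `[X_j, Y_j] = -4 ∂_s`, holomorphy gives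
`Y_j f = i X_j f` and `(X_j² + Y_j²) f = 4i ∂_s f = 4 ∂_t f`. For `φ(z) = |z|^p` the second-order
chain rule then gives `(X_j² + Y_j²)(φ ∘ f) = p² |f|^(p-2) |X_j f|² + 4 ∂_t (φ ∘ f)`, because
`D²φ(z)(a, a) + D²φ(z)(i a, i a) = p² |z|^(p-2) |a|²` is the Laplacian of `|z|^p`.
Averaging over `j` the time derivative cancels: `ℒ |f|^p = (p² / 4n) |f|^(p-2) ∑ |X_j f|² ≥ 0`.
-/

noncomputable section

/-- A point of the Heisenberg group ℋ_n : `(s, z) ∈ ℝ × ℂⁿ`. -/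
abbrev Heis (n : ℕ) := ℝ × (Fin n → ℂ)

/-- The left-invariant vector field `X_j = ∂/∂x_j + 2 x_{n+j} ∂/∂s` (real-valued). -/
def XR {n : ℕ} (j : Fin n) (v : Heis n → ℝ) (g : Heis n) : ℝ :=
  fderiv ℝ v g (2 * (g.2 j).im, Pi.single j 1)

/-- The left-invariant vector field `X_{n+j} = ∂/∂x_{n+j} − 2 x_j ∂/∂s` (real-valued). -/
def YR {n : ℕ} (j : Fin n) (v : Heis n → ℝ) (g : Heis n) : ℝ :=
  fderiv ℝ v g (-2 * (g.2 j).re, Pi.single j Complex.I)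

/-- The heat operator `ℒ = (1/(4n)) ∑_{j=1}^{2n} X_j² − ∂/∂t` on `ℝ₊ × ℋ_n`,
acting on real-valued functions. -/
def heatOpR (n : ℕ) (v : ℝ × Heis n → ℝ) (p : ℝ × Heis n) : ℝ :=
  (1 / (4 * (n : ℝ))) *
      ∑ j : Fin n, (XR j (XR j (fun g => v (p.1, g))) p.2 + YR j (YR j (fun g => v (p.1, g))) p.2)
    - fderiv ℝ v p (1, 0)

/-- Holomorphy on the one-factor flat model `𝒰_n = ℝ₊ × ℋ_n`:
`∂f/∂w̄ = (1/2)(∂f/∂s + i ∂f/∂t) = 0` and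
`Z̄_j f = ∂f/∂z̄_j − i z_j ∂f/∂s = 0`. -/
def IsFlatHolomorphicAt₁ (n : ℕ) (f : ℝ × Heis n → ℂ) (p : ℝ × Heis n) : Prop :=
  (1/2 : ℂ) * (fderiv ℝ f p (0, (1, 0)) + Complex.I * fderiv ℝ f p (1, 0)) = 0 ∧
  ∀ j : Fin n,
    (1/2 : ℂ) * (fderiv ℝ f p (0, (0, Pi.single j 1))
        + Complex.I * fderiv ℝ f p (0, (0, Pi.single j Complex.I)))
      - Complex.I * p.2.2 j * fderiv ℝ f p (0, (1, 0)) = 0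

open Filter Topology Complex RealInnerProductSpace

section Calculus

variable {E F G : Type*} [NormedAddCommGroup E] [NormedSpace ℝ E]
  [NormedAddCommGroup F] [NormedSpace ℝ F] [NormedAddCommGroup G] [NormedSpace ℝ G]

theorem ContDiffAt.hasFDerivAt_fderiv_apply {v : E → F} {V : E → E} {V' : E →L[ℝ] E} {q : E}
    (hv : ContDiffAt ℝ 2 v q) (hV : HasFDerivAt V V' q) :
    HasFDerivAt (fun x => fderiv ℝ v x (V x))
      ((fderiv ℝ (fderiv ℝ v) q).flip (V q) + (fderiv ℝ v q).comp V') q := by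
  rw [add_comm]
  exact ((hv.fderiv_right (m := 1) le_rfl).differentiableAt one_ne_zero).hasFDerivAt.clm_apply hV

theorem fderiv_comp_prodMk_right_apply {h : E × G → F} {a : E} {b : G}
    (hh : DifferentiableAt ℝ h (a, b)) (w : G) :
    fderiv ℝ (fun g => h (a, g)) b w = fderiv ℝ h (a, b) (0, w) := by
  have : HasFDerivAt (fun g => h (a, g)) _ b :=
    hh.hasFDerivAt.comp b (hasFDerivAt_prodMk_right a b)
  simp [this.fderiv]

theorem ContDiffAt.eventually_differentiableAt_prodMk_right {v : E × G → F} {q : E × G}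
    (hv : ContDiffAt ℝ 1 v q) : ∀ᶠ g in 𝓝 q.2, DifferentiableAt ℝ v (q.1, g) :=
  ((continuous_const.prodMk continuous_id).tendsto' q.2 q rfl).eventually
    ((hv.eventually (by simp)).mono fun _ h => h.differentiableAt one_ne_zero)

theorem fderiv_fderiv_comp_apply {g : F → G} {f : E → F} {q : E}
    (hg : ContDiffAt ℝ 2 g (f q)) (hf : ContDiffAt ℝ 2 f q) (v w : E) :
    fderiv ℝ (fderiv ℝ (g ∘ f)) q v w
      = fderiv ℝ (fderiv ℝ g) (f q) (fderiv ℝ f q v) (fderiv ℝ f q w)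
        + fderiv ℝ g (f q) (fderiv ℝ (fderiv ℝ f) q v w) := by
  have hfq : ∀ᶠ x in 𝓝 q, ContDiffAt ℝ 2 f x := hf.eventually (by simp)
  have hgf : ∀ᶠ x in 𝓝 q, ContDiffAt ℝ 2 g (f x) :=
    hf.continuousAt.eventually (hg.eventually (by simp))
  have hD : fderiv ℝ (g ∘ f) =ᶠ[𝓝 q] fun x => (fderiv ℝ g (f x)).comp (fderiv ℝ f x) := by
    filter_upwards [hfq, hgf] with x hfx hgx
    exact fderiv_comp x (hgx.differentiableAt two_ne_zero) (hfx.differentiableAt two_ne_zero)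
  have hg' : HasFDerivAt (fun x => fderiv ℝ g (f x))
      ((fderiv ℝ (fderiv ℝ g) (f q)).comp (fderiv ℝ f q)) q :=
    ((hg.fderiv_right (m := 1) le_rfl).differentiableAt one_ne_zero).hasFDerivAt.comp q
      (hf.differentiableAt two_ne_zero).hasFDerivAt
  have hf' : HasFDerivAt (fderiv ℝ f) (fderiv ℝ (fderiv ℝ f) q) q :=
    ((hf.fderiv_right (m := 1) le_rfl).differentiableAt one_ne_zero).hasFDerivAt
  rw [hD.fderiv_eq, (hg'.clm_comp hf').fderiv]
  simp [add_comm]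

end Calculus

section NormRpow

variable {E : Type*} [NormedAddCommGroup E] [InnerProductSpace ℝ E]

theorem hasFDerivAt_norm_rpow_of_ne_zero {x : E} (hx : x ≠ 0) (p : ℝ) :
    HasFDerivAt (fun y : E => ‖y‖ ^ p) ((p * ‖x‖ ^ (p - 2)) • innerSL ℝ x) x := by
  convert ((hasStrictFDerivAt_norm_sq x).rpow_const (p := p / 2) (by simp [hx])).hasFDerivAt
    using 1
  · ext y
    rw [← Real.rpow_natCast_mul (norm_nonneg _)]
    ring_nf
  · simp_rw [← Real.rpow_natCast_mul (norm_nonneg _), ← Nat.cast_smul_eq_nsmul ℝ, smul_smul]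
    ring_nf

theorem fderiv_fderiv_norm_rpow_apply {x : E} (hx : x ≠ 0) (p : ℝ) (h k : E) :
    fderiv ℝ (fderiv ℝ fun y : E => ‖y‖ ^ p) x h k
      = p * ‖x‖ ^ (p - 2) * ⟪h, k⟫ + p * (p - 2) * ‖x‖ ^ (p - 4) * ⟪x, h⟫ * ⟪x, k⟫ := by
  have hD : fderiv ℝ (fun y : E => ‖y‖ ^ p) =ᶠ[𝓝 x]
      fun y => (p * ‖y‖ ^ (p - 2)) • innerSL ℝ y := by
    filter_upwards [isOpen_ne.mem_nhds hx] with y hy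
    exact (hasFDerivAt_norm_rpow_of_ne_zero hy p).fderiv
  have hc : HasFDerivAt (fun y : E => p * ‖y‖ ^ (p - 2))
      (p • ((p - 2) * ‖x‖ ^ (p - 2 - 2)) • innerSL ℝ x) x :=
    (hasFDerivAt_norm_rpow_of_ne_zero hx (p - 2)).const_mul p
  rw [hD.fderiv_eq, (hc.fun_smul (innerSL ℝ).hasFDerivAt).fderiv]
  simp only [add_apply, smul_apply, ContinuousLinearMap.smulRight_apply, smul_eq_mul]
  rw [show p - 2 - 2 = p - 4 by ring]
  change p * ‖x‖ ^ (p - 2) * ⟪h, k⟫ + p * ((p - 2) * ‖x‖ ^ (p - 4) * ⟪x, h⟫) * ⟪x, k⟫ = _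
  ring

end NormRpow

theorem Complex.fderiv_fderiv_norm_rpow_add_I_mul {z : ℂ} (hz : z ≠ 0) (p : ℝ) (a : ℂ) :
    fderiv ℝ (fderiv ℝ fun y : ℂ => ‖y‖ ^ p) z a a
        + fderiv ℝ (fderiv ℝ fun y : ℂ => ‖y‖ ^ p) z (I * a) (I * a)
      = p ^ 2 * ‖z‖ ^ (p - 2) * ‖a‖ ^ 2 := by
  have hz4 : ‖z‖ ^ (p - 4) * ‖z‖ ^ 2 = ‖z‖ ^ (p - 2) := by
    rw [← Real.rpow_natCast, ← Real.rpow_add (norm_pos_iff.2 hz)]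
    norm_num [sub_add]
  have hsq : ⟪z, a⟫ ^ 2 + ⟪z, I * a⟫ ^ 2 = ‖z‖ ^ 2 * ‖a‖ ^ 2 := by
    simp only [Complex.inner, Complex.sq_norm, normSq_apply, mul_re, mul_im, I_re, I_im, conj_re,
      conj_im]
    ring
  have hI : ⟪I * a, I * a⟫ = ⟪a, a⟫ := by simp
  rw [fderiv_fderiv_norm_rpow_apply hz, fderiv_fderiv_norm_rpow_apply hz, hI,
    real_inner_self_eq_norm_sq]
  linear_combination (p * (p - 2) * ‖z‖ ^ (p - 4)) * hsq + (p * (p - 2) * ‖a‖ ^ 2) * hz4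

section Horizontal

variable {n : ℕ}

/-- The fields `X_j` and `X_{n+j}` of `ℋ_n` as vector fields on `𝒰_n`: `XR j v g` is the derivative
of `v` along `(horizX j (t, g)).2`, for any `t`. -/
def horizX (j : Fin n) (x : ℝ × Heis n) : ℝ × Heis n := (0, 2 * (x.2.2 j).im, Pi.single j 1)

def horizY (j : Fin n) (x : ℝ × Heis n) : ℝ × Heis n :=
  (0, -2 * (x.2.2 j).re, Pi.single j Complex.I)

def zCoord (j : Fin n) : (ℝ × Heis n) →L[ℝ] ℂ :=
  (ContinuousLinearMap.proj j).comp
    ((ContinuousLinearMap.snd ℝ ℝ _).comp (ContinuousLinearMap.snd ℝ ℝ _))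

theorem horizX_eq (j : Fin n) (x : ℝ × Heis n) :
    horizX j x = (2 * (x.2.2 j).im) • (0, 1, 0) + (0, 0, Pi.single j 1) := by
  simp [horizX]

theorem horizY_eq (j : Fin n) (x : ℝ × Heis n) :
    horizY j x = (-2 * (x.2.2 j).re) • (0, 1, 0) + (0, 0, Pi.single j Complex.I) := by
  simp [horizY]

theorem hasFDerivAt_horizX (j : Fin n) (x : ℝ × Heis n) :
    HasFDerivAt (horizX j) (((2 : ℝ) • imCLM.comp (zCoord j)).smulRight (0, 1, 0)) x := by
  have : horizX j = fun y => ((2 : ℝ) • imCLM.comp (zCoord j)).smulRight (0, 1, 0) y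
      + (0, 0, Pi.single j 1) := by
    ext1 y; simp [horizX_eq, zCoord]
  rw [this]
  exact (ContinuousLinearMap.hasFDerivAt _).add_const _

theorem hasFDerivAt_horizY (j : Fin n) (x : ℝ × Heis n) :
    HasFDerivAt (horizY j) (((-2 : ℝ) • reCLM.comp (zCoord j)).smulRight (0, 1, 0)) x := by
  have : horizY j = fun y => ((-2 : ℝ) • reCLM.comp (zCoord j)).smulRight (0, 1, 0) y
      + (0, 0, Pi.single j Complex.I) := by
    ext1 y; simp [horizY_eq, zCoord]
  rw [this]
  exact (ContinuousLinearMap.hasFDerivAt _).add_const _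

@[simp] theorem zCoord_horizX (j : Fin n) (x : ℝ × Heis n) : zCoord j (horizX j x) = 1 := by
  simp [zCoord, horizX]

@[simp] theorem zCoord_horizY (j : Fin n) (x : ℝ × Heis n) : zCoord j (horizY j x) = I := by
  simp [zCoord, horizY]

end Horizontal

section HeatOperator

variable {n : ℕ}

-- The `∂_s`-coefficient of `X_j` is constant along `X_j`, so no first-order term appears.
theorem XR_XR_eq {u : ℝ × Heis n → ℝ} {q : ℝ × Heis n} (hu : ContDiffAt ℝ 2 u q) (j : Fin n) :
    XR j (XR j fun g => u (q.1, g)) q.2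
      = fderiv ℝ (fderiv ℝ u) q (horizX j q) (horizX j q) := by
  have hH := hu.hasFDerivAt_fderiv_apply (hasFDerivAt_horizX j q)
  have hev : XR j (fun g => u (q.1, g)) =ᶠ[𝓝 q.2]
      fun g => fderiv ℝ u (q.1, g) (horizX j (q.1, g)) := by
    filter_upwards [(hu.of_le one_le_two).eventually_differentiableAt_prodMk_right] with g hg
    exact fderiv_comp_prodMk_right_apply hg _
  rw [XR, hev.fderiv_eq, fderiv_comp_prodMk_right_apply hH.differentiableAt, hH.fderiv]
  simp [horizX, zCoord]

theorem YR_YR_eq {u : ℝ × Heis n → ℝ} {q : ℝ × Heis n} (hu : ContDiffAt ℝ 2 u q) (j : Fin n) :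
    YR j (YR j fun g => u (q.1, g)) q.2
      = fderiv ℝ (fderiv ℝ u) q (horizY j q) (horizY j q) := by
  have hH := hu.hasFDerivAt_fderiv_apply (hasFDerivAt_horizY j q)
  have hev : YR j (fun g => u (q.1, g)) =ᶠ[𝓝 q.2]
      fun g => fderiv ℝ u (q.1, g) (horizY j (q.1, g)) := by
    filter_upwards [(hu.of_le one_le_two).eventually_differentiableAt_prodMk_right] with g hg
    exact fderiv_comp_prodMk_right_apply hg _
  rw [YR, hev.fderiv_eq, fderiv_comp_prodMk_right_apply hH.differentiableAt, hH.fderiv]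
  simp [horizY, zCoord]

theorem heatOpR_eq {u : ℝ × Heis n → ℝ} {q : ℝ × Heis n} (hu : ContDiffAt ℝ 2 u q) :
    heatOpR n u q = 1 / (4 * n) * ∑ j : Fin n,
        (fderiv ℝ (fderiv ℝ u) q (horizX j q) (horizX j q)
          + fderiv ℝ (fderiv ℝ u) q (horizY j q) (horizY j q))
      - fderiv ℝ u q (1, 0) := by
  simp only [heatOpR, XR_XR_eq hu, YR_YR_eq hu]

end HeatOperator

section Holomorphy

variable {n : ℕ} {f : ℝ × Heis n → ℂ}

theorem IsFlatHolomorphicAt₁.fderiv_horizY {x : ℝ × Heis n} (hf : IsFlatHolomorphicAt₁ n f x)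
    (j : Fin n) : fderiv ℝ f x (horizY j x) = I * fderiv ℝ f x (horizX j x) := by
  have hz : x.2.2 j = (x.2.2 j).re + (x.2.2 j).im * I := (re_add_im _).symm
  have hZ := hf.2 j
  rw [hz] at hZ
  rw [horizX_eq, horizY_eq, map_add, map_add, map_smul, map_smul, real_smul, real_smul]
  push_cast
  linear_combination (-2 * I) * hZ + (fderiv ℝ f x (0, 0, Pi.single j I)
    - 2 * ((x.2.2 j).re + I * (x.2.2 j).im) * fderiv ℝ f x (0, 1, 0)) * I_sq

theorem fderiv_fderiv_horizX_add_horizY {q : ℝ × Heis n} (hf : ContDiffAt ℝ 2 f q)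
    (hholo : ∀ᶠ x in 𝓝 q, IsFlatHolomorphicAt₁ n f x) (j : Fin n) :
    fderiv ℝ (fderiv ℝ f) q (horizX j q) (horizX j q)
        + fderiv ℝ (fderiv ℝ f) q (horizY j q) (horizY j q)
      = 4 * fderiv ℝ f q (1, 0) := by
  -- Differentiate `Y_j f - i X_j f ≡ 0` along `X_j` and `Y_j`: the derivatives of the coefficients
  -- of the fields supply the bracket `[X_j, Y_j] = -4 ∂_s`.
  have hG := (hf.hasFDerivAt_fderiv_apply (hasFDerivAt_horizY j q)).fun_sub
    ((hf.hasFDerivAt_fderiv_apply (hasFDerivAt_horizX j q)).const_mul I)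
  have hG0 : (fun x => fderiv ℝ f x (horizY j x) - I * fderiv ℝ f x (horizX j x))
      =ᶠ[𝓝 q] fun _ => 0 := by
    filter_upwards [hholo] with x hx
    rw [hx.fderiv_horizY j, sub_self]
  have hGq := hG.fderiv
  rw [hG0.fderiv_eq, fderiv_fun_const, Pi.zero_apply] at hGq
  have hX := congrArg (fun L => L (horizX j q)) hGq
  have hY := congrArg (fun L => L (horizY j q)) hGq
  have hsymm := (hf.isSymmSndFDerivAt (by simp)) (horizX j q) (horizY j q)
  have hw := (hholo.self_of_nhds).1
  have hs : ∀ r : ℝ, fderiv ℝ f q (0, r, 0) = r * fderiv ℝ f q (0, 1, 0) := fun r => by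
    rw [← real_smul, ← map_smul, Prod.smul_mk, Prod.smul_mk, smul_zero, smul_zero, smul_eq_mul,
      mul_one]
  simp only [zero_apply, sub_apply, add_apply, ContinuousLinearMap.flip_apply,
    ContinuousLinearMap.comp_apply, ContinuousLinearMap.smulRight_apply, smul_apply,
    zCoord_horizX, zCoord_horizY, reCLM_apply, imCLM_apply, one_re, one_im, I_re, I_im,
    smul_eq_mul, mul_one, mul_zero, neg_smul, Prod.smul_mk, Prod.neg_mk, smul_zero, neg_zero,
    zero_smul, map_zero, add_zero] at hX hY
  rw [hs] at hX hY
  push_cast at hX hY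
  linear_combination (-I) * hX - hY + (-I) * hsymm + 8 * I * hw
    + (fderiv ℝ (fderiv ℝ f) q (horizX j q) (horizX j q) - 4 * fderiv ℝ f q (1, 0)) * I_sq

end Holomorphy

theorem heatOpR_norm_rpow_eq {n : ℕ} (hn : n ≠ 0) {f : ℝ × Heis n → ℂ} {q : ℝ × Heis n}
    (hf : ContDiffAt ℝ 2 f q) (hholo : ∀ᶠ x in 𝓝 q, IsFlatHolomorphicAt₁ n f x) (hfq : f q ≠ 0)
    (p : ℝ) :
    heatOpR n (fun x => ‖f x‖ ^ p) q
      = 1 / (4 * n) * ∑ j : Fin n, p ^ 2 * ‖f q‖ ^ (p - 2) * ‖fderiv ℝ f q (horizX j q)‖ ^ 2 := by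
  set φ : ℂ → ℝ := fun z => ‖z‖ ^ p
  have hφ : ContDiffAt ℝ 2 φ (f q) :=
    (contDiffAt_norm ℝ hfq).rpow_const_of_ne (norm_ne_zero_iff.2 hfq)
  have hu : ContDiffAt ℝ 2 (φ ∘ f) q := hφ.comp q hf
  have hDφ : fderiv ℝ φ (f q) (4 * fderiv ℝ f q (1, 0))
      = 4 * fderiv ℝ φ (f q) (fderiv ℝ f q (1, 0)) := by
    rw [show (4 : ℂ) = (4 : ℝ) by norm_num, ← real_smul, map_smul, smul_eq_mul]
  have hj : ∀ j : Fin n,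
      fderiv ℝ (fderiv ℝ (φ ∘ f)) q (horizX j q) (horizX j q)
          + fderiv ℝ (fderiv ℝ (φ ∘ f)) q (horizY j q) (horizY j q)
        = p ^ 2 * ‖f q‖ ^ (p - 2) * ‖fderiv ℝ f q (horizX j q)‖ ^ 2
          + 4 * fderiv ℝ φ (f q) (fderiv ℝ f q (1, 0)) := by
    intro j
    rw [fderiv_fderiv_comp_apply hφ hf, fderiv_fderiv_comp_apply hφ hf,
      hholo.self_of_nhds.fderiv_horizY, add_add_add_comm, ← map_add,
      fderiv_fderiv_horizX_add_horizY hf hholo j, Complex.fderiv_fderiv_norm_rpow_add_I_mul hfq,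
      hDφ]
  have hdt : fderiv ℝ (φ ∘ f) q (1, 0) = fderiv ℝ φ (f q) (fderiv ℝ f q (1, 0)) := by
    rw [fderiv_comp q (hφ.differentiableAt two_ne_zero) (hf.differentiableAt two_ne_zero)]
    rfl
  change heatOpR n (φ ∘ f) q = _
  rw [heatOpR_eq hu, hdt, Finset.sum_congr rfl fun j _ => hj j, Finset.sum_add_distrib,
    Finset.sum_const, Finset.card_univ, Fintype.card_fin, nsmul_eq_mul]
  field_simp
  ring

theorem heatOp_abs_rpow_nonneg_general (n : ℕ) (hn : 0 < n)
    (f : ℝ × Heis n → ℂ)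
    (hf : ContDiffOn ℝ 2 f {q : ℝ × Heis n | 0 < q.1})
    (hholo : ∀ q : ℝ × Heis n, 0 < q.1 → IsFlatHolomorphicAt₁ n f q)
    (p : ℝ) :
    ∀ q : ℝ × Heis n, 0 < q.1 → f q ≠ 0 →
      0 ≤ heatOpR n (fun x => ‖f x‖ ^ p) q := by
  intro q hq hfq
  have hU : {x : ℝ × Heis n | 0 < x.1} ∈ 𝓝 q :=
    (isOpen_lt continuous_const continuous_fst).mem_nhds hq
  rw [heatOpR_norm_rpow_eq hn.ne' (hf.contDiffAt hU) (eventually_of_mem hU hholo) hfq p]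
  positivity

/-- Parabolic subharmonicity: if `f` is C² and holomorphic on `𝒰_n = ℝ₊ × ℋ_n`,
then `ℒ |f|^p ≥ 0` at every point where `f ≠ 0`, for every `p > 0`. -/
theorem heatOp_abs_rpow_nonneg (n : ℕ) (hn : 0 < n)
    (f : ℝ × Heis n → ℂ)
    (hf : ContDiffOn ℝ 2 f {q : ℝ × Heis n | 0 < q.1})
    (hholo : ∀ q : ℝ × Heis n, 0 < q.1 → IsFlatHolomorphicAt₁ n f q)
    (p : ℝ) (hp : 0 < p) :
    ∀ q : ℝ × Heis n, 0 < q.1 → f q ≠ 0 →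
      0 ≤ heatOpR n (fun x => ‖f x‖ ^ p) q :=
  heatOp_abs_rpow_nonneg_general n hn f hf hholo p

end
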